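/- arXiv:2104.05317 — 3 statements merged into one kernel-verified Lean document; each statement's English description precedes it below -/
import Mathlib

section
/- Let A be a finite-dimensional algebra over a field, e an idempotent, and t(M) = AeM. Let Λ' be a set of indices λ with indecomposable projective modules P(λ), and suppose that for every λ ∈ Λ' the socle of P(λ) satisfies soc P(λ) = Ae·soc P(λ). Set P = ⊕_{λ∈Λ'} P(λ). Then the map t : End_A(P) → End_A(t(P)) sending θ to its restriction θ|_{t(P)} is an injective algebra homomorphism. -/
/-- The trace submodule `t(M) = AeM` of `M`. -/
def traceSub (A : Type) [Ring A] (e : A) (M : Type) [AddCommGroup M] [Module A M] :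
    Submodule A M :=
  Submodule.span A (Set.range fun m : M => e • m)

/-- The socle of a module: the sum of all its simple submodules. -/
def socleSub (A : Type) [Ring A] (M : Type) [AddCommGroup M] [Module A M] :
    Submodule A M :=
  sSup {S : Submodule A M | IsSimpleModule A ↥S}

/-- `Ae·N` for a submodule `N` of `M`. -/
def eTr (A : Type) [Ring A] (e : A) {M : Type} [AddCommGroup M] [Module A M]
    (N : Submodule A M) : Submodule A M :=
  Submodule.span A ((fun x => e • x) '' (N : Set M))

theorem traceSub_mapsTo (A : Type) [Ring A] (e : A) (M : Type) [AddCommGroup M]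
    [Module A M] (θ : Module.End A M) :
    ∀ x ∈ traceSub A e M, θ x ∈ traceSub A e M := by
  intro x hx
  have h : Submodule.map θ (traceSub A e M) ≤ traceSub A e M := by
    rw [traceSub, Submodule.map_span, Submodule.span_le]
    rintro y ⟨z, ⟨m, rfl⟩, rfl⟩
    exact Submodule.subset_span ⟨θ m, (map_smul θ e m).symm⟩
  exact h ⟨x, hx, rfl⟩

/-- The restriction map `End_A(M) → End_A(t(M))`, `θ ↦ θ|_{t(M)}`. -/
def resEnd (A : Type) [Ring A] (e : A) (M : Type) [AddCommGroup M] [Module A M]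
    (θ : Module.End A M) : Module.End A ↥(traceSub A e M) :=
  LinearMap.restrict θ (traceSub_mapsTo A e M θ)

/-! If `θ` and `φ` agree on `t(P) = AeP`, then `ψ = θ - φ` kills `eP`, so `e` annihilates `im ψ`.
Over the artinian ring `A` a nonzero `im ψ` contains a simple submodule `S`, and some component
of `⨁ P(λ)` maps `S` isomorphically onto a simple `T ≤ soc P(λ)` with `eT = 0`. But `T` is a
direct summand of the semisimple `soc P(λ) = Ae·soc P(λ)`, so `T = AeT = 0`. -/

variable {A : Type} [Ring A] {M : Type} [AddCommGroup M] [Module A M] {e : A}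

lemma Submodule.isAtomic_of_isArtinianRing [IsArtinianRing A] : IsAtomic (Submodule A M) := by
  refine ⟨fun N => or_iff_not_imp_left.2 fun hN => ?_⟩
  obtain ⟨x, hxN, hx⟩ := N.ne_bot_iff.1 hN
  have : IsArtinian A (A ∙ x) := isArtinian_of_fg_of_artinian _ (Submodule.fg_span_singleton x)
  have : Nontrivial (A ∙ x) :=
    ⟨⟨⟨x, Submodule.mem_span_singleton_self x⟩, 0, by simpa [Subtype.ext_iff] using hx⟩⟩
  obtain ⟨S, hS⟩ := IsAtomic.exists_atom (Submodule A (A ∙ x))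
  refine ⟨S.map (A ∙ x).subtype, (((A ∙ x).mapIic.isAtom_iff S).2 hS).of_isAtom_coe_Iic, ?_⟩
  exact (Submodule.map_subtype_le _ _).trans ((Submodule.span_singleton_le_iff_mem x N).2 hxN)

instance socleSub.isSemisimpleModule : IsSemisimpleModule A (socleSub A M) := by
  rw [socleSub, sSup_eq_iSup]
  exact isSemisimpleModule_biSup_of_isSemisimpleModule_submodule fun _ (_ : IsSimpleModule A _) =>
    inferInstance

lemma eq_bot_of_le_of_smul_eq_zero {N T : Submodule A M} [IsSemisimpleModule A N]
    (hN : eTr A e N = N) (hTN : T ≤ N) (hT : ∀ t ∈ T, e • t = 0) : T = ⊥ := by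
  obtain ⟨C, -, hTC, hC⟩ := Set.Iic.complementedLattice_iff.1
    ((Submodule.mapIic N).complementedLattice_iff.1 inferInstance) T hTN
  have hNC : N ≤ C := by
    rw [← hN, eTr, Submodule.span_le]
    rintro _ ⟨x, hx, rfl⟩
    obtain ⟨t, ht, c, hc, rfl⟩ := Submodule.mem_sup.1 (hC.ge hx)
    simpa [smul_add, hT t ht] using C.smul_mem e hc
  simpa [hTC] using le_inf le_rfl (hTN.trans hNC)

lemma exists_smul_ne_zero_of_eTr_socleSub (hsoc : eTr A e (socleSub A M) = socleSub A M)
    (S : Submodule A M) [IsSimpleModule A S] : ∃ s ∈ S, e • s ≠ 0 := by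
  by_contra! hS
  exact (isSimpleModule_iff_isAtom.1 ‹_›).1
    (eq_bot_of_le_of_smul_eq_zero hsoc (le_sSup (α := Submodule A M) ‹_›) hS)

lemma DirectSum.exists_isSimpleModule_map_component {ι : Type} {P : ι → Type}
    [∀ i, AddCommGroup (P i)] [∀ i, Module A (P i)] (S : Submodule A (DirectSum ι P))
    [IsSimpleModule A S] : ∃ i, IsSimpleModule A (S.map (DirectSum.component A ι P i)) := by
  obtain ⟨s, hsS, hs⟩ := S.ne_bot_iff.1 (isSimpleModule_iff_isAtom.1 ‹_›).1
  obtain ⟨i, hi⟩ : ∃ i, s i ≠ 0 := not_forall.1 fun h => hs (DFinsupp.ext h)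
  let f := DirectSum.component A ι P i ∘ₗ S.subtype
  have hf : Function.Injective f :=
    LinearMap.injective_of_ne_zero fun h0 => hi (LinearMap.congr_fun h0 ⟨s, hsS⟩)
  refine ⟨i, ?_⟩
  rw [← Submodule.range_subtype S, ← LinearMap.range_comp]
  exact IsSimpleModule.congr (LinearEquiv.ofInjective f hf).symm

lemma resEnd_injective [IsAtomic (Submodule A M)]
    (h : ∀ S : Submodule A M, IsSimpleModule A S → ∃ s ∈ S, e • s ≠ 0) :
    Function.Injective (resEnd A e M) := by
  intro θ φ hθφ
  have hψ : ∀ m, (θ - φ) (e • m) = 0 := fun m => by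
    simpa [resEnd, Subtype.ext_iff, smul_sub, sub_eq_zero] using
      LinearMap.congr_fun hθφ ⟨e • m, Submodule.subset_span ⟨m, rfl⟩⟩
  rw [← sub_eq_zero, ← LinearMap.range_eq_bot]
  refine (eq_bot_or_exists_atom_le _).resolve_right ?_
  rintro ⟨S, hS, hSψ⟩
  obtain ⟨_, hs, hes⟩ := h S (isSimpleModule_iff_isAtom.2 hS)
  obtain ⟨m, rfl⟩ := hSψ hs
  exact hes (by rw [← map_smul, hψ])

lemma resEnd_mul (θ φ : Module.End A M) :
    resEnd A e M (θ * φ) = resEnd A e M θ * resEnd A e M φ := rfl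

lemma resEnd_one : resEnd A e M 1 = 1 := rfl

lemma resEnd_add (θ φ : Module.End A M) :
    resEnd A e M (θ + φ) = resEnd A e M θ + resEnd A e M φ := rfl

lemma DirectSum.exists_smul_ne_zero_of_forall_eTr_socleSub {ι : Type} {P : ι → Type}
    [∀ i, AddCommGroup (P i)] [∀ i, Module A (P i)]
    (hsoc : ∀ i, eTr A e (socleSub A (P i)) = socleSub A (P i))
    (S : Submodule A (DirectSum ι P)) [IsSimpleModule A S] : ∃ s ∈ S, e • s ≠ 0 := by
  obtain ⟨i, hi⟩ := exists_isSimpleModule_map_component S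
  obtain ⟨_, ⟨s, hs, rfl⟩, hes⟩ :=
    exists_smul_ne_zero_of_eTr_socleSub (hsoc i) (S.map (component A ι P i))
  exact ⟨s, hs, fun h => hes (by rw [← map_smul, h, map_zero])⟩

theorem resEnd_injective_algHom_general
    (K : Type) [Field K] (A : Type) [Ring A] [Algebra K A] [FiniteDimensional K A]
    (e : A)
    (Λ' : Type)
    (P : Λ' → Type) [∀ l, AddCommGroup (P l)] [∀ l, Module A (P l)]
    (hsoc : ∀ l, eTr A e (socleSub A (P l)) = socleSub A (P l)) :
    Function.Injective (resEnd A e (DirectSum Λ' P))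
    ∧ (∀ θ φ : Module.End A (DirectSum Λ' P),
        resEnd A e (DirectSum Λ' P) (θ * φ)
          = resEnd A e (DirectSum Λ' P) θ * resEnd A e (DirectSum Λ' P) φ)
    ∧ resEnd A e (DirectSum Λ' P) 1 = 1
    ∧ (∀ θ φ : Module.End A (DirectSum Λ' P),
        resEnd A e (DirectSum Λ' P) (θ + φ)
          = resEnd A e (DirectSum Λ' P) θ + resEnd A e (DirectSum Λ' P) φ) := by
  have : IsArtinianRing A := isArtinian_of_tower K inferInstance
  have : IsAtomic (Submodule A (DirectSum Λ' P)) := Submodule.isAtomic_of_isArtinianRing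
  exact ⟨resEnd_injective fun S _ => DirectSum.exists_smul_ne_zero_of_forall_eTr_socleSub hsoc S,
    resEnd_mul, resEnd_one, resEnd_add⟩

/-- Let `A` be a finite-dimensional algebra, `e` an idempotent, and
`t(M) = AeM`.  Let `Λ'` index indecomposable projective modules `P λ` whose socles
satisfy `soc P(λ) = Ae · soc P(λ)`.  Then for `P = ⊕_{λ ∈ Λ'} P(λ)` the restriction map
`t : End_A(P) → End_A(t(P))` is an injective algebra homomorphism. -/
theorem resEnd_injective_algHom
    (K : Type) [Field K] (A : Type) [Ring A] [Algebra K A] [FiniteDimensional K A]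
    (e : A) (he : IsIdempotentElem e)
    (Λ' : Type) [Fintype Λ'] [DecidableEq Λ']
    (P : Λ' → Type) [∀ l, AddCommGroup (P l)] [∀ l, Module A (P l)]
    [∀ l, Module.Finite A (P l)]
    (hproj : ∀ l, Module.Projective A (P l))
    (hnontriv : ∀ l, Nontrivial (P l))
    (hindec : ∀ l, ∀ N₁ N₂ : Submodule A (P l), IsCompl N₁ N₂ → N₁ = ⊥ ∨ N₂ = ⊥)
    (hsoc : ∀ l, eTr A e (socleSub A (P l)) = socleSub A (P l)) :
    Function.Injective (resEnd A e (DirectSum Λ' P))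
    ∧ (∀ θ φ : Module.End A (DirectSum Λ' P),
        resEnd A e (DirectSum Λ' P) (θ * φ)
          = resEnd A e (DirectSum Λ' P) θ * resEnd A e (DirectSum Λ' P) φ)
    ∧ resEnd A e (DirectSum Λ' P) 1 = 1
    ∧ (∀ θ φ : Module.End A (DirectSum Λ' P),
        resEnd A e (DirectSum Λ' P) (θ + φ)
          = resEnd A e (DirectSum Λ' P) θ + resEnd A e (DirectSum Λ' P) φ) :=
  resEnd_injective_algHom_general K A e Λ' P hsoc
end

section
/- With the setup of the previous theorem (soc P(λ) = Ae·soc P(λ) for all λ ∈ Λ'), for any λ, μ ∈ Λ' and any nonzero A-module homomorphism θ : P(λ) → P(μ), the restriction of θ to t(P(λ)) = Ae·P(λ) is nonzero. -/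
/-!
A nonzero `θ : P(λ) → P(μ)` has nonzero image, which over the Artinian ring `A` contains a simple
submodule `L ⊆ soc P(μ)`. The condition `soc P(μ) = Ae·soc P(μ)` passes to every quotient of the
semisimple module `soc P(μ)`, in particular to its summand `L`, so `e` does not annihilate `L`.
Writing `s = θ y ∈ L` with `e • s ≠ 0` gives `e • y ∈ t(P(λ))` with `θ (e • y) = e • s ≠ 0`.
-/

section Trace

variable {A : Type} [Ring A] (e : A) {M N : Type} [AddCommGroup M] [Module A M]
  [AddCommGroup N] [Module A N]

lemma map_traceSub_le (f : M →ₗ[A] N) : (traceSub A e M).map f ≤ traceSub A e N := by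
  rw [traceSub, Submodule.map_span_le]
  rintro _ ⟨m, rfl⟩
  rw [map_smul]
  exact Submodule.subset_span ⟨f m, rfl⟩

lemma traceSub_eq_top_of_surjective {f : M →ₗ[A] N} (hf : Function.Surjective f)
    (h : traceSub A e M = ⊤) : traceSub A e N = ⊤ := by
  rw [eq_top_iff, ← LinearMap.range_eq_top.mpr hf, LinearMap.range_eq_map, ← h]
  exact map_traceSub_le e f

lemma exists_smul_ne_zero_of_traceSub_eq_top [Nontrivial M] (h : traceSub A e M = ⊤) :
    ∃ m : M, e • m ≠ 0 := by
  by_contra! hzero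
  have hbot : traceSub A e M = ⊥ := by
    rw [traceSub, Submodule.span_eq_bot]
    rintro _ ⟨m, rfl⟩
    exact hzero m
  exact top_ne_bot (h.symm.trans hbot)

lemma map_subtype_traceSub (S : Submodule A M) :
    (traceSub A e S).map S.subtype = eTr A e S := by
  rw [traceSub, Submodule.map_span, eTr, ← Set.range_comp]
  congr 1
  ext x
  simp

lemma traceSub_eq_top_of_eTr_eq {S : Submodule A M} (h : eTr A e S = S) :
    traceSub A e S = ⊤ := by
  apply Submodule.map_injective_of_injective S.injective_subtype
  rw [map_subtype_traceSub, Submodule.map_subtype_top, h]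

lemma IsSemisimpleModule.exists_mem_smul_ne_zero [IsSemisimpleModule A M]
    (h : traceSub A e M = ⊤) {L : Submodule A M} (hL : L ≠ ⊥) : ∃ m ∈ L, e • m ≠ 0 := by
  obtain ⟨C, hC⟩ := exists_isCompl L
  have hLtop := traceSub_eq_top_of_surjective e (Submodule.projectionOnto_surjective hC) h
  have : Nontrivial L := Submodule.nontrivial_iff_ne_bot.mpr hL
  obtain ⟨⟨m, hm⟩, hem⟩ := exists_smul_ne_zero_of_traceSub_eq_top e hLtop
  exact ⟨m, hm, fun h0 => hem (Subtype.ext h0)⟩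

end Trace

instance isSemisimpleModule_socleSub (A : Type) [Ring A] (M : Type) [AddCommGroup M]
    [Module A M] : IsSemisimpleModule A (socleSub A M) := by
  rw [socleSub, sSup_eq_iSup]
  exact isSemisimpleModule_biSup_of_isSemisimpleModule_submodule fun S hS => by
    have : IsSimpleModule A S := hS
    infer_instance

lemma exists_mem_socleSub_smul_ne_zero {A : Type} [Ring A] {e : A} {M : Type}
    [AddCommGroup M] [Module A M] (hsoc : eTr A e (socleSub A M) = socleSub A M)
    {L : Submodule A M} (hL : IsAtom L) : ∃ m ∈ L, e • m ≠ 0 := by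
  set S := socleSub A M
  have hLS : L ≤ S := le_sSup ((isSimpleModule_iff_isAtom).mpr hL)
  have hL' : L.comap S.subtype ≠ ⊥ := fun h => hL.1 <| by
    rw [← inf_eq_right.mpr hLS, ← Submodule.map_comap_subtype, h, Submodule.map_bot]
  obtain ⟨⟨m, _⟩, hm, hem⟩ :=
    IsSemisimpleModule.exists_mem_smul_ne_zero e (traceSub_eq_top_of_eTr_eq e hsoc) hL'
  exact ⟨m, hm, fun h0 => hem (Subtype.ext h0)⟩

theorem restriction_nonzero_general
    (K : Type) [Field K] (A : Type) [Ring A] [Algebra K A] [FiniteDimensional K A]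
    (e : A)
    (Pl Pm : Type) [AddCommGroup Pl] [Module A Pl] [AddCommGroup Pm] [Module A Pm]
    [Module.Finite A Pm]
    (hsocm : eTr A e (socleSub A Pm) = socleSub A Pm) :
    ∀ θ : Pl →ₗ[A] Pm, θ ≠ 0 → ∃ x ∈ traceSub A e Pl, θ x ≠ 0 := by
  intro θ hθ
  have : IsArtinianRing A := isArtinian_of_tower K inferInstance
  obtain ⟨L, hL, hLθ⟩ := (eq_bot_or_exists_atom_le (LinearMap.range θ)).resolve_left
    (LinearMap.range_eq_bot.not.mpr hθ)
  obtain ⟨s, hs, hes⟩ := exists_mem_socleSub_smul_ne_zero hsocm hL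
  obtain ⟨y, rfl⟩ := hLθ hs
  exact ⟨e • y, Submodule.subset_span ⟨y, rfl⟩, by rwa [map_smul]⟩

/-- With indecomposable projective modules `P(λ)`, `P(μ)` whose socles
`S` satisfy `S = AeS`, every nonzero homomorphism `θ : P(λ) → P(μ)` has nonzero
restriction to `t(P(λ)) = Ae·P(λ)`. -/
theorem restriction_nonzero
    (K : Type) [Field K] (A : Type) [Ring A] [Algebra K A] [FiniteDimensional K A]
    (e : A) (he : IsIdempotentElem e)
    (Pl Pm : Type) [AddCommGroup Pl] [Module A Pl] [AddCommGroup Pm] [Module A Pm]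
    [Module.Finite A Pl] [Module.Finite A Pm]
    (hprojl : Module.Projective A Pl) (hprojm : Module.Projective A Pm)
    (hntl : Nontrivial Pl) (hntm : Nontrivial Pm)
    (hindecl : ∀ N₁ N₂ : Submodule A Pl, IsCompl N₁ N₂ → N₁ = ⊥ ∨ N₂ = ⊥)
    (hindecm : ∀ N₁ N₂ : Submodule A Pm, IsCompl N₁ N₂ → N₁ = ⊥ ∨ N₂ = ⊥)
    (hsocl : eTr A e (socleSub A Pl) = socleSub A Pl)
    (hsocm : eTr A e (socleSub A Pm) = socleSub A Pm) :
    ∀ θ : Pl →ₗ[A] Pm, θ ≠ 0 → ∃ x ∈ traceSub A e Pl, θ x ≠ 0 :=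
  restriction_nonzero_general K A e Pl Pm hsocm
end

section
/- Let B be a block of a Schur algebra with a·p^k simple modules and λ ∈ B a weight not in I_0^{(k)}. Then the indecomposable tilting module T(λ) has exactly two Δ-quotients (i.e. Σ_ρ [T(λ):Δ(ρ)] = 2) if and only if λ is the smallest weight in I_c^{(k)} for some c ≥ 1. -/
/-!
Since `T(λ_m) ≅ T(ℓ+i*) ⊗ T̄(m-1)^F` and every `Δ̄`-quotient of `T̄(m-1)` yields two
`Δ`-quotients, `T(λ_m)` has twice as many `Δ`-quotients as `T̄(m-1)` has `Δ̄`-quotients.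
By the recursion for `ctilt`, the latter number `ctiltSum p (m-1)` is unchanged under
`n ↦ n / p` when the last base-`p` digit of `n` is `p - 1`, and doubles under `n ↦ n / p - 1`
otherwise; so it is `1` exactly when `m = d·p^v` with `1 ≤ d ≤ p`. As `a ≤ p`, the only such
`m` in `[p^k, a·p^k)` are the `c·p^k`.
-/

def cdec (p : ℕ) (m n : ℕ) : ℕ :=
  if h : p ≤ 1 ∨ m < p then (if n = m then 1 else 0)
  else
    (if n % p = m % p then cdec p (m / p) (n / p) else 0) +
    (if m % p ≠ p - 1 ∧ n % p = p - 2 - m % p then cdec p (m / p - 1) (n / p) else 0)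
termination_by m
decreasing_by
  · push_neg at h
    exact Nat.div_lt_self (by omega) (by omega)
  · push_neg at h
    exact lt_of_le_of_lt (Nat.sub_le _ _) (Nat.div_lt_self (by omega) (by omega))

/-- Filtration multiplicities `[T̄(m) : Δ̄(n)]` of standard modules in indecomposable
tilting modules of the classical Schur algebra `S(2,r)`, via the factorisations
`T̄(pq+j) ≅ T̄(p+j) ⊗ T̄(q-1)^F` (for `0 ≤ j ≤ p-2`), `T̄(pq+p-1) ≅ T̄(p-1) ⊗ T̄(q)^F`,
and the short exact sequence `0 → Δ̄(pu+j) → T̄(p+j) ⊗ Δ̄(u-?)` giving the two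
`Δ`-quotients `Δ̄(p(u+1)+j)` and `Δ̄(pu + p-2-j)`. -/
def ctilt (p : ℕ) (m n : ℕ) : ℕ :=
  if h : p ≤ 1 ∨ m < p then (if n = m then 1 else 0)
  else if m % p = p - 1 then
    (if n % p = p - 1 then ctilt p (m / p) (n / p) else 0)
  else
    (if n % p = m % p ∧ 1 ≤ n / p then ctilt p (m / p - 1) (n / p - 1) else 0) +
    (if n % p = p - 2 - m % p then ctilt p (m / p - 1) (n / p) else 0)
termination_by m
decreasing_by
  · push_neg at h
    exact Nat.div_lt_self (by omega) (by omega)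
  · push_neg at h
    exact lt_of_le_of_lt (Nat.sub_le _ _) (Nat.div_lt_self (by omega) (by omega))
  · push_neg at h
    exact lt_of_le_of_lt (Nat.sub_le _ _) (Nat.div_lt_self (by omega) (by omega))

/-- Decomposition numbers `[Δ(λ_m) : L(λ_n)]` for a primitive block of the (quantum)
Schur algebra, indexed by the positions `m, n` of the weights `λ_m = ℓm + i*(m)` in the
block: from `0 → Δ(ī*) ⊗ Δ̄(m-1)^F → Δ(ℓm + i*) → L(i*) ⊗ Δ̄(m)^F → 0`. -/
def qdec (p : ℕ) (m n : ℕ) : ℕ :=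
  cdec p m n + (if 1 ≤ m then cdec p (m - 1) n else 0)

/-- Tilting multiplicities `[T(λ_m) : Δ(λ_n)]` for a primitive block of the (quantum)
Schur algebra, indexed as in `qdec`: from `T(ℓm+i*) ≅ T(ℓ+i*) ⊗ T̄(m-1)^F` and the fact
that `T(ℓ+i*) ⊗ Δ̄(u)^F` has exactly the two `Δ`-quotients `Δ(ℓ(u+1)+i*)`, `Δ(ℓu+ī*)`. -/
def qtilt (p : ℕ) (m n : ℕ) : ℕ :=
  if 1 ≤ m then
    (if 1 ≤ n then ctilt p (m - 1) (n - 1) else 0) + ctilt p (m - 1) n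
  else (if n = 0 then 1 else 0)

/-- The weight in position `m` of a primitive block with lowest weight `i`:
`wt m = ℓ·m + i*` where `i* = i` or `ℓ - 2 - i` according to the parity of `m`. -/
def wt (ℓ i : ℤ) (m : ℕ) : ℤ := ℓ * m + (if Even m then i else ℓ - 2 - i)

def ctiltSum (p m : ℕ) : ℕ :=
  if h : p ≤ 1 ∨ m < p then 1
  else if m % p = p - 1 then ctiltSum p (m / p)
  else 2 * ctiltSum p (m / p - 1)
termination_by m
decreasing_by
  · push Not at h
    exact Nat.div_lt_self (by omega) (by omega)
  · push Not at h
    exact lt_of_le_of_lt (Nat.sub_le _ _) (Nat.div_lt_self (by omega) (by omega))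

theorem add_one_eq_mul_iff {m p q : ℕ} (hp : 0 < p) :
    m + 1 = p * q ↔ m % p = p - 1 ∧ m / p + 1 = q := by
  rcases q.eq_zero_or_pos with rfl | hq
  · simp
  have := Nat.div_mod_unique (a := m) (d := q - 1) (c := p - 1) hp
  have := Nat.mul_sub_one p q
  have := Nat.le_mul_of_pos_right p hq
  omega

section Sums

variable {β : Type*} [AddCommMonoid β]

theorem sum_range_mul_ite_mod_eq {p r : ℕ} (hr : r < p) (g : ℕ → β) (M : ℕ) :
    ∑ n ∈ Finset.range (p * M), (if n % p = r then g (n / p) else 0) =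
      ∑ u ∈ Finset.range M, g u := by
  induction M with
  | zero => simp
  | succ M ih =>
    have hblock : ∑ j ∈ Finset.range p,
        (if (p * M + j) % p = r then g ((p * M + j) / p) else 0) =
          ∑ j ∈ Finset.range p, (if j = r then g M else 0) :=
      Finset.sum_congr rfl fun j hj => by
        rw [Nat.mul_add_mod, Nat.mod_eq_of_lt (Finset.mem_range.1 hj), Nat.mul_add_div (by omega),
          Nat.div_eq_of_lt (Finset.mem_range.1 hj), add_zero]
    rw [Nat.mul_succ, Finset.sum_range_add, ih, Finset.sum_range_succ, hblock,
      Finset.sum_ite_eq', if_pos (Finset.mem_range.2 hr)]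

theorem sum_range_succ_ite_one_le (f : ℕ → β) (M : ℕ) :
    ∑ u ∈ Finset.range (M + 1), (if 1 ≤ u then f (u - 1) else 0) =
      ∑ u ∈ Finset.range M, f u := by
  simp [Finset.sum_range_succ']

end Sums

theorem ctilt_eq_zero_of_lt {p m n : ℕ} (h : m < n) : ctilt p m n = 0 := by
  induction m using Nat.strong_induction_on generalizing n with
  | _ m ih =>
  by_cases hbase : p ≤ 1 ∨ m < p
  · rw [ctilt, dif_pos hbase, if_neg h.ne']
  push Not at hbase
  have hq : 1 ≤ m / p := (Nat.one_le_div_iff (by omega)).2 hbase.2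
  have hqm : m / p < m := Nat.div_lt_self (by omega) (by omega)
  have hdiv : m / p ≤ n / p := Nat.div_le_div_right h.le
  have hdiv_lt (hmod : n % p = m % p) : m / p < n / p := by
    have := Nat.div_add_mod m p
    have := Nat.div_add_mod n p
    exact Nat.lt_of_mul_lt_mul_left (a := p) (by omega)
  rw [ctilt, dif_neg (by omega)]
  split_ifs with hm hn hA hB hB
  · exact ih _ hqm (hdiv_lt (by omega))
  · rfl
  · rw [ih _ (by omega) (by have := hdiv_lt hA.1; omega), ih _ (by omega) (by omega)]
  · rw [ih _ (by omega) (by have := hdiv_lt hA.1; omega), add_zero]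
  · rw [ih _ (by omega) (by omega), zero_add]
  · rfl

theorem sum_range_ctilt_eq_of_lt {p m N : ℕ} (h : m < N) :
    ∑ n ∈ Finset.range N, ctilt p m n = ∑ n ∈ Finset.range (m + 1), ctilt p m n :=
  (Finset.sum_subset (Finset.range_subset_range.2 h) fun _ hN hm =>
    ctilt_eq_zero_of_lt (by simp only [Finset.mem_range] at hN hm; omega)).symm

theorem sum_range_ctilt {p m N : ℕ} (h : m < N) :
    ∑ n ∈ Finset.range N, ctilt p m n = ctiltSum p m := by
  induction m using Nat.strong_induction_on generalizing N with
  | _ m ih =>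
  by_cases hbase : p ≤ 1 ∨ m < p
  · have hrow (n : ℕ) : ctilt p m n = if n = m then 1 else 0 := by rw [ctilt, dif_pos hbase]
    simp only [hrow]
    rw [Finset.sum_ite_eq', if_pos (Finset.mem_range.2 h), ctiltSum, dif_pos hbase]
  push Not at hbase
  have hp : 0 < p := by omega
  have hq : 1 ≤ m / p := (Nat.one_le_div_iff hp).2 hbase.2
  have hqm : m / p < m := Nat.div_lt_self (by omega) (by omega)
  have hlt : m < p * (m / p + 1) := Nat.lt_mul_div_succ m hp
  rw [sum_range_ctilt_eq_of_lt h, ← sum_range_ctilt_eq_of_lt hlt, ctiltSum,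
    dif_neg (by omega)]
  by_cases hm : m % p = p - 1
  · have hrow (n : ℕ) :
        ctilt p m n = if n % p = p - 1 then ctilt p (m / p) (n / p) else 0 := by
      rw [ctilt, dif_neg (by omega), if_pos hm]
    simp only [hrow, if_pos hm]
    rw [sum_range_mul_ite_mod_eq (by omega), ih _ hqm (by omega)]
  · have hrow (n : ℕ) : ctilt p m n =
        (if n % p = m % p then (if 1 ≤ n / p then ctilt p (m / p - 1) (n / p - 1) else 0)
          else 0) +
        (if n % p = p - 2 - m % p then ctilt p (m / p - 1) (n / p) else 0) := by
      rw [ctilt, dif_neg (by omega), if_neg hm, ite_and]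
    simp only [hrow, if_neg hm]
    rw [Finset.sum_add_distrib, sum_range_mul_ite_mod_eq (Nat.mod_lt m hp)
      (fun u => if 1 ≤ u then ctilt p (m / p - 1) (u - 1) else 0),
      sum_range_mul_ite_mod_eq (by omega), sum_range_succ_ite_one_le,
      ih _ (by omega) (by omega), ih _ (by omega) (by omega), two_mul]

theorem sum_range_qtilt {p m N : ℕ} (hm : 1 ≤ m) (h : m < N) :
    ∑ n ∈ Finset.range N, qtilt p m n = 2 * ctiltSum p (m - 1) := by
  obtain ⟨N, rfl⟩ : ∃ N', N = N' + 1 := ⟨N - 1, by omega⟩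
  simp only [qtilt, if_pos hm]
  rw [Finset.sum_add_distrib, sum_range_succ_ite_one_le, sum_range_ctilt (by omega),
    sum_range_ctilt (by omega), two_mul]

theorem one_le_ctiltSum (p m : ℕ) : 1 ≤ ctiltSum p m := by
  induction m using Nat.strong_induction_on with
  | _ m ih =>
  rw [ctiltSum]
  split_ifs with hbase
  · exact le_rfl
  · exact ih _ (Nat.div_lt_self (by omega) (by omega))
  · have hqm : m / p < m := Nat.div_lt_self (by omega) (by omega)
    have := ih (m / p - 1) (by omega)
    omega

theorem ctiltSum_eq_one_iff {p : ℕ} (hp : 2 ≤ p) (m : ℕ) :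
    ctiltSum p m = 1 ↔ ∃ v d, 1 ≤ d ∧ d ≤ p ∧ m + 1 = d * p ^ v := by
  constructor
  · induction m using Nat.strong_induction_on with
    | _ m ih =>
    intro h
    by_cases hbase : m < p
    · exact ⟨0, m + 1, by omega, hbase, by simp⟩
    rw [ctiltSum, dif_neg (by omega)] at h
    split_ifs at h with hm
    · obtain ⟨v, d, hd, hdp, hq⟩ := ih _ (Nat.div_lt_self (by omega) (by omega)) h
      refine ⟨v + 1, d, hd, hdp, ?_⟩
      rw [(add_one_eq_mul_iff (by omega)).2 ⟨hm, hq⟩, pow_succ]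
      ring
    · have := one_le_ctiltSum p (m / p - 1)
      omega
  · rintro ⟨v, d, hd, hdp, hmv⟩
    induction v generalizing m with
    | zero => rw [ctiltSum, dif_pos (by simp at hmv; omega)]
    | succ v ih =>
      by_cases hbase : m < p
      · rw [ctiltSum, dif_pos (Or.inr hbase)]
      have hmv' : m + 1 = p * (d * p ^ v) := by rw [hmv]; ring
      obtain ⟨hm, hq⟩ := (add_one_eq_mul_iff (by omega)).1 hmv'
      rw [ctiltSum, dif_neg (by omega), if_pos hm, ih _ hq]

theorem exists_eq_mul_pow_iff_of_mem_Ico {p a k m : ℕ} (hp : 2 ≤ p) (hap : a ≤ p)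
    (hm : p ^ k ≤ m) (hma : m < a * p ^ k) :
    (∃ v d, 1 ≤ d ∧ d ≤ p ∧ m = d * p ^ v) ↔ ∃ c, 1 ≤ c ∧ c ≤ a - 1 ∧ m = c * p ^ k := by
  refine ⟨?_, fun ⟨c, hc, hca, hmc⟩ => ⟨k, c, hc, by omega, hmc⟩⟩
  rintro ⟨v, d, hd, hdp, rfl⟩
  have hpow {i j : ℕ} (h : i ≤ j) : p ^ i ≤ p ^ j := Nat.pow_le_pow_right (by omega) h
  rcases lt_trichotomy v k with hvk | rfl | hvk
  · have hm' : d * p ^ v ≤ p ^ k :=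
      (Nat.mul_le_mul_right _ hdp).trans (pow_succ' p v ▸ hpow hvk)
    have ha : 1 < a := Nat.lt_of_mul_lt_mul_right (a := p ^ k) (by omega)
    exact ⟨1, le_rfl, by omega, by omega⟩
  · exact ⟨d, hd, by have := Nat.lt_of_mul_lt_mul_right hma; omega, rfl⟩
  · have : a * p ^ k ≤ d * p ^ v :=
      calc a * p ^ k ≤ p ^ (k + 1) := pow_succ' p k ▸ Nat.mul_le_mul_right _ hap
        _ ≤ p ^ v := hpow hvk
        _ ≤ d * p ^ v := Nat.le_mul_of_pos_left _ hd
    omega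

theorem two_delta_quotients_iff_general (p a k : ℕ) (hp : p.Prime) (hap : a ≤ p)
    (ℓ i : ℤ)
    (TILT : ℤ → ℤ → ℕ)
    (hTILT : ∀ m n : ℕ, m < a * p ^ k → n < a * p ^ k →
      TILT (wt ℓ i m) (wt ℓ i n) = qtilt p m n) :
    ∀ m : ℕ, p ^ k ≤ m → m < a * p ^ k →
      ((∑ n ∈ Finset.range (a * p ^ k), TILT (wt ℓ i m) (wt ℓ i n)) = 2 ↔
        ∃ c : ℕ, 1 ≤ c ∧ c ≤ a - 1 ∧ m = c * p ^ k) := by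
  intro m hm hma
  have hm₀ : 1 ≤ m := (Nat.one_le_pow _ _ hp.pos).trans hm
  have hrow : ∑ n ∈ Finset.range (a * p ^ k), TILT (wt ℓ i m) (wt ℓ i n) =
      2 * ctiltSum p (m - 1) := by
    rw [Finset.sum_congr rfl fun n hn => hTILT m n hma (Finset.mem_range.1 hn)]
    exact sum_range_qtilt hm₀ hma
  have hone := ctiltSum_eq_one_iff hp.two_le (m - 1)
  rw [Nat.sub_add_cancel hm₀, exists_eq_mul_pow_iff_of_mem_Ico hp.two_le hap hm hma] at hone
  rw [hrow, ← hone]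
  omega

/-- **Lemma 3.11.** In a primitive block `B` of a Schur algebra with
`a·p^k` simple modules, let `λ = wt m ∈ B \ I_0^{(k)}` (so `p^k ≤ m < a·p^k`).  Then
`T(λ)` has exactly two `Δ`-quotients, i.e. `∑_{ρ ∈ B} [T(λ) : Δ(ρ)] = 2`, if and only
if `λ` is the smallest weight of `I_c^{(k)}` for some `c ≥ 1`, i.e. `m = c·p^k`. -/
theorem two_delta_quotients_iff (p a k : ℕ) (hp : p.Prime) (ha : 2 ≤ a) (hap : a ≤ p)
    (ℓ i : ℤ) (hℓ : 2 ≤ ℓ) (hi0 : 0 ≤ i) (hi : i ≤ ℓ - 2)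
    (TILT : ℤ → ℤ → ℕ)
    (hTILT : ∀ m n : ℕ, m < a * p ^ k → n < a * p ^ k →
      TILT (wt ℓ i m) (wt ℓ i n) = qtilt p m n) :
    ∀ m : ℕ, p ^ k ≤ m → m < a * p ^ k →
      ((∑ n ∈ Finset.range (a * p ^ k), TILT (wt ℓ i m) (wt ℓ i n)) = 2 ↔
        ∃ c : ℕ, 1 ≤ c ∧ c ≤ a - 1 ∧ m = c * p ^ k) :=
  two_delta_quotients_iff_general p a k hp hap ℓ i TILT hTILT
end
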